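/- Let G be a simple connected graph and suppose κ_LLY(x,y) ≥ κ₀ for every edge xy of G. Then κ_LLY(x,y) ≥ κ₀ for every pair of distinct vertices x, y. -/

import Mathlib

open Filter Set

variable {V : Type*}

-- The `α`-lazy random walk distribution at vertex `x`.
open Classical in
noncomputable def lazyWalk (G : SimpleGraph V) [G.LocallyFinite] (α : ℝ) (x : V) : V → ℝ :=
  fun v => if v = x then α else if G.Adj x v then (1 - α) / (G.degree x : ℝ) else 0

/-- `A` is a coupling between the finitely supported distributions `m₁` and `m₂`. -/
def IsCoupling (m₁ m₂ : V → ℝ) (A : V → V → ℝ) : Prop :=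
  (Function.support fun p : V × V => A p.1 p.2).Finite ∧
  (∀ x y, 0 ≤ A x y ∧ A x y ≤ 1) ∧
  (∀ x, ∑ᶠ y, A x y = m₁ x) ∧
  (∀ y, ∑ᶠ x, A x y = m₂ y)

/-- The transportation (Wasserstein) distance between two distributions on `V`,
with respect to the graph distance of `G`. -/
noncomputable def transportDist (G : SimpleGraph V) (m₁ m₂ : V → ℝ) : ℝ :=
  sInf {w : ℝ | ∃ A : V → V → ℝ, IsCoupling m₁ m₂ A ∧
    w = ∑ᶠ p : V × V, A p.1 p.2 * (G.dist p.1 p.2 : ℝ)}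

/-- The `α`-Ricci curvature `κ_α(x,y)`. -/
noncomputable def alphaRicci (G : SimpleGraph V) [G.LocallyFinite] (α : ℝ) (x y : V) : ℝ :=
  1 - transportDist G (lazyWalk G α x) (lazyWalk G α y) / (G.dist x y : ℝ)

/-- `κ` is the Lin–Lu–Yau Ricci curvature of the pair `(x,y)`:
the limit of `κ_α(x,y)/(1-α)` as `α → 1⁻`. -/
def HasLLYCurv (G : SimpleGraph V) [G.LocallyFinite] (x y : V) (κ : ℝ) : Prop :=
  Tendsto (fun α : ℝ => alphaRicci G α x y / (1 - α)) (nhdsWithin 1 (Set.Iio 1)) (nhds κ)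

/-- `G` is positively curved: every edge has positive Lin–Lu–Yau Ricci curvature. -/
def PositivelyCurved (G : SimpleGraph V) [G.LocallyFinite] : Prop :=
  ∀ ⦃x y : V⦄, G.Adj x y → ∃ κ : ℝ, 0 < κ ∧ HasLLYCurv G x y κ

/-- `G` is planar: it admits a topological embedding in the plane, i.e. an injective
placement of the vertices together with arcs for the edges, where arcs are injective
continuous curves joining the endpoints, not passing through any other vertex, and
two arcs of distinct edges meet only in common endpoints. -/
def IsPlanar (G : SimpleGraph V) : Prop :=
  ∃ (f : V → ℝ × ℝ) (e : ∀ u v : V, G.Adj u v → Set.Icc (0:ℝ) 1 → ℝ × ℝ),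
    Function.Injective f ∧
    (∀ u v (h : G.Adj u v), Continuous (e u v h)) ∧
    (∀ u v (h : G.Adj u v), Function.Injective (e u v h)) ∧
    (∀ u v (h : G.Adj u v),
      e u v h ⟨0, Set.left_mem_Icc.mpr zero_le_one⟩ = f u ∧
      e u v h ⟨1, Set.right_mem_Icc.mpr zero_le_one⟩ = f v) ∧
    (∀ u v (h : G.Adj u v) (w : V), w ≠ u → w ≠ v → f w ∉ Set.range (e u v h)) ∧
    (∀ u v (h : G.Adj u v) (u' v' : V) (h' : G.Adj u' v'), ({u, v} : Set V) ≠ {u', v'} →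
      Set.range (e u v h) ∩ Set.range (e u' v' h') ⊆ (f '' {u, v}) ∩ (f '' {u', v'}))

/-!
Along a geodesic `x = v₀, v₁, …, v_d = y`, the triangle inequality for the transportation distance
(obtained by gluing couplings) gives `W(m_x^α, m_y^α) ≤ ∑ W(m_{vᵢ}^α, m_{vᵢ₊₁}^α)`, that is
`d · κ_α(x, y) ≥ ∑ κ_α(vᵢ, vᵢ₊₁)`; dividing by `1 - α` and letting `α → 1` gives
`d · κ(x, y) ≥ ∑ κ(vᵢ, vᵢ₊₁) ≥ d · κ₀`. The limit defining `κ(x, y)` exists because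
`κ_α(x, y) / (1 - α)` is monotone in `α` (`m_x^{α'}` is a convex combination of `δ_x` and `m_x^α`,
and `W` is jointly convex) and bounded by `2 / d`, since `W(m_x^α, m_y^α) ≥ d - 2 (1 - α)`.
-/

open scoped Classical

structure IsFinProb (m : V → ℝ) : Prop where
  finite_support : (Function.support m).Finite
  nonneg : ∀ v, 0 ≤ m v
  finsum_eq_one : ∑ᶠ v, m v = 1

namespace IsFinProb

variable {m : V → ℝ}

lemma le_one (hm : IsFinProb m) (v : V) : m v ≤ 1 :=
  hm.finsum_eq_one ▸ single_le_finsum v hm.finite_support hm.nonneg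

lemma single (x : V) : IsFinProb (Pi.single x 1 : V → ℝ) where
  finite_support := (Set.finite_singleton x).subset Pi.support_single_subset
  nonneg v := by rw [Pi.single_apply]; split_ifs <;> norm_num
  finsum_eq_one := by
    rw [finsum_eq_single _ x fun v hv => Pi.single_eq_of_ne hv _, Pi.single_eq_same]

end IsFinProb

def SupportedOn (A : V → V → ℝ) (s : Finset V) : Prop :=
  ∀ u v, A u v ≠ 0 → u ∈ s ∧ v ∈ s

lemma SupportedOn.mono {A : V → V → ℝ} {s t : Finset V} (hs : SupportedOn A s) (hst : s ⊆ t) :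
    SupportedOn A t :=
  fun u v h => ⟨hst (hs u v h).1, hst (hs u v h).2⟩

lemma SupportedOn.finsum_mul_eq_sum {A : V → V → ℝ} {s : Finset V} (hs : SupportedOn A s)
    (f : V → V → ℝ) :
    ∑ᶠ p : V × V, A p.1 p.2 * f p.1 p.2 = ∑ u ∈ s, ∑ v ∈ s, A u v * f u v := by
  rw [← Finset.sum_product (f := fun p : V × V => A p.1 p.2 * f p.1 p.2)]
  exact finsum_eq_sum_of_support_subset _ fun p hp =>
    Finset.mem_product.2 (hs p.1 p.2 (left_ne_zero_of_mul hp))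

lemma SupportedOn.convexComb {A B : V → V → ℝ} {s : Finset V} (hA : SupportedOn A s)
    (hB : SupportedOn B s) (c : ℝ) : SupportedOn (fun u v => (1 - c) * A u v + c * B u v) s := by
  intro u v h
  by_cases hAuv : A u v = 0
  · exact hB u v (right_ne_zero_of_mul (by simpa [hAuv] using h))
  · exact hA u v hAuv

namespace IsCoupling

variable {m m₁ m₂ n₁ n₂ : V → ℝ} {A B : V → V → ℝ} {s : Finset V}

lemma nonneg (hA : IsCoupling m₁ m₂ A) (u v : V) : 0 ≤ A u v := (hA.2.1 u v).1

lemma exists_supportedOn (hA : IsCoupling m₁ m₂ A) : ∃ s : Finset V, SupportedOn A s := by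
  refine ⟨hA.1.toFinset.image Prod.fst ∪ hA.1.toFinset.image Prod.snd, fun u v h => ?_⟩
  have huv : (u, v) ∈ hA.1.toFinset := hA.1.mem_toFinset.2 h
  exact ⟨Finset.mem_union_left _ (Finset.mem_image_of_mem _ huv),
    Finset.mem_union_right _ (Finset.mem_image_of_mem _ huv)⟩

lemma exists_supportedOn₂ (hA : IsCoupling m₁ m₂ A) (hB : IsCoupling n₁ n₂ B) :
    ∃ s : Finset V, SupportedOn A s ∧ SupportedOn B s := by
  obtain ⟨s, hs⟩ := hA.exists_supportedOn
  obtain ⟨t, ht⟩ := hB.exists_supportedOn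
  exact ⟨s ∪ t, hs.mono Finset.subset_union_left, ht.mono Finset.subset_union_right⟩

lemma sum_right (hA : IsCoupling m₁ m₂ A) (hs : SupportedOn A s) (u : V) :
    ∑ v ∈ s, A u v = m₁ u :=
  (finsum_eq_sum_of_support_subset _ fun v hv => (hs u v hv).2).symm.trans (hA.2.2.1 u)

lemma sum_left (hA : IsCoupling m₁ m₂ A) (hs : SupportedOn A s) (v : V) :
    ∑ u ∈ s, A u v = m₂ v :=
  (finsum_eq_sum_of_support_subset _ fun u hu => (hs u v hu).1).symm.trans (hA.2.2.2 v)

lemma le_left (hA : IsCoupling m₁ m₂ A) (u v : V) : A u v ≤ m₁ u := by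
  obtain ⟨s, hs⟩ := hA.exists_supportedOn
  rw [← hA.sum_right (hs.mono (Finset.subset_insert v s)) u]
  exact Finset.single_le_sum (fun w _ => hA.nonneg u w) (Finset.mem_insert_self v s)

lemma le_right (hA : IsCoupling m₁ m₂ A) (u v : V) : A u v ≤ m₂ v := by
  obtain ⟨s, hs⟩ := hA.exists_supportedOn
  rw [← hA.sum_left (hs.mono (Finset.subset_insert u s)) v]
  exact Finset.single_le_sum (fun w _ => hA.nonneg w v) (Finset.mem_insert_self u s)

lemma right_nonneg (hA : IsCoupling m₁ m₂ A) (v : V) : 0 ≤ m₂ v :=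
  (hA.nonneg v v).trans (hA.le_right v v)

lemma finsum_left_mul_eq_sum (hA : IsCoupling m₁ m₂ A) (hs : SupportedOn A s) (g : V → ℝ) :
    ∑ᶠ u, m₁ u * g u = ∑ u ∈ s, m₁ u * g u := by
  refine finsum_eq_sum_of_support_subset _ fun u hu => ?_
  rw [Function.mem_support, ← hA.sum_right hs u] at hu
  obtain ⟨v, -, hv⟩ := Finset.exists_ne_zero_of_sum_ne_zero (left_ne_zero_of_mul hu)
  exact (hs u v hv).1

lemma finsum_right_mul_eq_sum (hA : IsCoupling m₁ m₂ A) (hs : SupportedOn A s) (h : V → ℝ) :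
    ∑ᶠ v, m₂ v * h v = ∑ v ∈ s, m₂ v * h v := by
  refine finsum_eq_sum_of_support_subset _ fun v hv => ?_
  rw [Function.mem_support, ← hA.sum_left hs v] at hv
  obtain ⟨u, -, hu⟩ := Finset.exists_ne_zero_of_sum_ne_zero (left_ne_zero_of_mul hv)
  exact (hs u v hu).2

lemma finsum_mul_add (hA : IsCoupling m₁ m₂ A) (g h : V → ℝ) :
    ∑ᶠ p : V × V, A p.1 p.2 * (g p.1 + h p.2) = ∑ᶠ u, m₁ u * g u + ∑ᶠ v, m₂ v * h v := by
  obtain ⟨s, hs⟩ := hA.exists_supportedOn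
  rw [hs.finsum_mul_eq_sum (fun u v => g u + h v), hA.finsum_left_mul_eq_sum hs,
    hA.finsum_right_mul_eq_sum hs]
  simp only [mul_add, Finset.sum_add_distrib]
  rw [Finset.sum_comm (f := fun u v => A u v * h v)]
  simp only [← Finset.sum_mul, hA.sum_right hs, hA.sum_left hs]

lemma finsum_mul_le (hA : IsCoupling m₁ m₂ A) {f g : V → V → ℝ} (hfg : ∀ u v, f u v ≤ g u v) :
    ∑ᶠ p : V × V, A p.1 p.2 * f p.1 p.2 ≤ ∑ᶠ p : V × V, A p.1 p.2 * g p.1 p.2 := by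
  obtain ⟨s, hs⟩ := hA.exists_supportedOn
  rw [hs.finsum_mul_eq_sum, hs.finsum_mul_eq_sum]
  gcongr with u _ v _
  · exact hA.nonneg u v
  · exact hfg u v

lemma of_sum (hs : SupportedOn A s) (h0 : ∀ u v, 0 ≤ A u v) (h1 : ∀ u v, A u v ≤ 1)
    (hrow : ∀ u, ∑ v ∈ s, A u v = m₁ u) (hcol : ∀ v, ∑ u ∈ s, A u v = m₂ v) :
    IsCoupling m₁ m₂ A :=
  ⟨(s ×ˢ s).finite_toSet.subset fun p hp => by simpa using hs p.1 p.2 hp,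
    fun u v => ⟨h0 u v, h1 u v⟩,
    fun u => (finsum_eq_sum_of_support_subset _ fun v hv => (hs u v hv).2).trans (hrow u),
    fun v => (finsum_eq_sum_of_support_subset _ fun u hu => (hs u v hu).1).trans (hcol v)⟩

lemma prod (h₁ : IsFinProb m₁) (h₂ : IsFinProb m₂) : IsCoupling m₁ m₂ fun u v => m₁ u * m₂ v :=
  ⟨(h₁.finite_support.prod h₂.finite_support).subset fun _ hp =>
      ⟨left_ne_zero_of_mul hp, right_ne_zero_of_mul hp⟩,
    fun u v => ⟨mul_nonneg (h₁.nonneg u) (h₂.nonneg v),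
      mul_le_one₀ (h₁.le_one u) (h₂.nonneg v) (h₂.le_one v)⟩,
    fun u => by rw [← mul_finsum, h₂.finsum_eq_one, mul_one],
    fun v => by rw [← finsum_mul, h₁.finsum_eq_one, one_mul]⟩

lemma diag (hm : IsFinProb m) : IsCoupling m m fun u v => if u = v then m u else 0 := by
  refine ⟨(hm.finite_support.image fun u => (u, u)).subset ?_, fun u v => ?_, fun u => ?_,
    fun v => ?_⟩
  · rintro ⟨u, v⟩ h
    by_cases huv : u = v
    · subst huv
      exact ⟨u, by simpa using h, rfl⟩
    · simp [huv] at h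
  · dsimp only
    split_ifs
    exacts [⟨hm.nonneg u, hm.le_one u⟩, ⟨le_rfl, zero_le_one⟩]
  · rw [finsum_eq_single _ u fun v hv => if_neg (Ne.symm hv), if_pos rfl]
  · rw [finsum_eq_single _ v fun u hu => if_neg hu, if_pos rfl]

lemma convexComb (hA : IsCoupling m₁ m₂ A) (hB : IsCoupling n₁ n₂ B) {c : ℝ} (hc₀ : 0 ≤ c)
    (hc₁ : c ≤ 1) :
    IsCoupling (fun u => (1 - c) * m₁ u + c * n₁ u) (fun v => (1 - c) * m₂ v + c * n₂ v)
      fun u v => (1 - c) * A u v + c * B u v := by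
  obtain ⟨s, hAs, hBs⟩ := hA.exists_supportedOn₂ hB
  refine of_sum (hAs.convexComb hBs c) (fun u v => ?_) (fun u v => ?_) (fun u => ?_) (fun v => ?_)
  · have := hA.nonneg u v; have := hB.nonneg u v; positivity
  · nlinarith [hA.2.1 u v, hB.2.1 u v]
  · rw [Finset.sum_add_distrib, ← Finset.mul_sum, ← Finset.mul_sum, hA.sum_right hAs,
      hB.sum_right hBs]
  · rw [Finset.sum_add_distrib, ← Finset.mul_sum, ← Finset.mul_sum, hA.sum_left hAs,
      hB.sum_left hBs]

end IsCoupling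

/-- Where `m y = 0` the summand is `0` by the convention `a / 0 = 0`; this is harmless for couplings
through `m`, which then vanish at `y`. -/
noncomputable def gluing (A B : V → V → ℝ) (m : V → ℝ) : V → V → ℝ :=
  fun x z => ∑ᶠ y, A x y * B y z / m y

namespace SupportedOn

variable {m : V → ℝ} {A B : V → V → ℝ} {s : Finset V}

lemma gluing_eq_sum (hs : SupportedOn A s) (x z : V) :
    gluing A B m x z = ∑ y ∈ s, A x y * B y z / m y :=
  finsum_eq_sum_of_support_subset _ fun y hy =>
    (hs x y (left_ne_zero_of_mul (div_ne_zero_iff.1 hy).1)).2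

lemma gluing (hA : SupportedOn A s) (hB : SupportedOn B s) : SupportedOn (gluing A B m) s := by
  intro x z h
  rw [hA.gluing_eq_sum] at h
  obtain ⟨y, -, hy⟩ := Finset.exists_ne_zero_of_sum_ne_zero h
  have hAB := (div_ne_zero_iff.1 hy).1
  exact ⟨(hA x y (left_ne_zero_of_mul hAB)).1, (hB y z (right_ne_zero_of_mul hAB)).2⟩

end SupportedOn

namespace IsCoupling

variable {m₁ m₂ m₃ : V → ℝ} {A B : V → V → ℝ} {s : Finset V}

lemma sum_gluing_right (hA : IsCoupling m₁ m₂ A) (hB : IsCoupling m₂ m₃ B)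
    (hs : SupportedOn B s) (x y : V) : ∑ z ∈ s, A x y * B y z / m₂ y = A x y := by
  simp_rw [mul_div_right_comm, ← Finset.mul_sum, hB.sum_right hs]
  exact div_mul_cancel_of_imp fun h => le_antisymm (h ▸ hA.le_right x y) (hA.nonneg x y)

lemma sum_gluing_left (hA : IsCoupling m₁ m₂ A) (hB : IsCoupling m₂ m₃ B)
    (hs : SupportedOn A s) (y z : V) : ∑ x ∈ s, A x y * B y z / m₂ y = B y z := by
  simp_rw [mul_comm (A _ y), mul_div_right_comm, ← Finset.mul_sum, hA.sum_left hs]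
  exact div_mul_cancel_of_imp fun h => le_antisymm (h ▸ hB.le_left y z) (hB.nonneg y z)

lemma gluing (hA : IsCoupling m₁ m₂ A) (hB : IsCoupling m₂ m₃ B) (hm₁ : ∀ u, m₁ u ≤ 1) :
    IsCoupling m₁ m₃ (gluing A B m₂) := by
  obtain ⟨s, hAs, hBs⟩ := hA.exists_supportedOn₂ hB
  have hrow (x : V) : ∑ z ∈ s, _root_.gluing A B m₂ x z = m₁ x := by
    simp_rw [hAs.gluing_eq_sum]
    rw [Finset.sum_comm]
    simp_rw [hA.sum_gluing_right hB hBs]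
    exact hA.sum_right hAs x
  refine of_sum (hAs.gluing hBs) (fun x z => ?_) (fun x z => ?_) hrow fun z => ?_
  · rw [hAs.gluing_eq_sum]
    exact Finset.sum_nonneg fun y _ =>
      div_nonneg (mul_nonneg (hA.nonneg x y) (hB.nonneg y z)) (hA.right_nonneg y)
  · rw [hAs.gluing_eq_sum]
    refine (Finset.sum_le_sum fun y _ => ?_).trans ((hA.sum_right hAs x).trans_le (hm₁ x))
    rw [mul_div_assoc]
    exact mul_le_of_le_one_right (hA.nonneg x y)
      (div_le_one_of_le₀ (hB.le_left y z) (hA.right_nonneg y))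
  · simp_rw [hAs.gluing_eq_sum]
    rw [Finset.sum_comm]
    simp_rw [hA.sum_gluing_left hB hAs]
    exact hB.sum_left hBs z

end IsCoupling

noncomputable def transportCost (G : SimpleGraph V) (A : V → V → ℝ) : ℝ :=
  ∑ᶠ p : V × V, A p.1 p.2 * (G.dist p.1 p.2 : ℝ)

section TransportCost

variable {G : SimpleGraph V} {m m₁ m₂ m₃ n₁ n₂ : V → ℝ} {A B : V → V → ℝ}

lemma SupportedOn.transportCost_eq_sum {s : Finset V} (hs : SupportedOn A s) :
    transportCost G A = ∑ u ∈ s, ∑ v ∈ s, A u v * G.dist u v :=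
  hs.finsum_mul_eq_sum fun u v => (G.dist u v : ℝ)

lemma IsCoupling.transportCost_nonneg (hA : IsCoupling m₁ m₂ A) : 0 ≤ transportCost G A :=
  finsum_nonneg fun _ => mul_nonneg (hA.nonneg _ _) (Nat.cast_nonneg _)

lemma transportCost_diag : transportCost G (fun u v => if u = v then m u else 0) = 0 :=
  finsum_eq_zero_of_forall_eq_zero fun p => by
    dsimp only
    split_ifs with h <;> simp [h]

lemma transportCost_single_mul_single (x y : V) :
    transportCost G (fun u v => (Pi.single x 1 : V → ℝ) u * (Pi.single y 1 : V → ℝ) v) =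
      G.dist x y := by
  rw [transportCost, finsum_eq_single _ (x, y)]
  · simp
  · rintro ⟨u, v⟩ huv
    by_cases hu : u = x
    · simp [hu, show v ≠ y by rintro rfl; exact huv (by rw [hu])]
    · simp [Pi.single_apply, hu]

lemma transportCost_convexComb (hA : IsCoupling m₁ m₂ A) (hB : IsCoupling n₁ n₂ B) (c : ℝ) :
    transportCost G (fun u v => (1 - c) * A u v + c * B u v) =
      (1 - c) * transportCost G A + c * transportCost G B := by
  obtain ⟨s, hAs, hBs⟩ := hA.exists_supportedOn₂ hB
  rw [(hAs.convexComb hBs c).transportCost_eq_sum, hAs.transportCost_eq_sum,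
    hBs.transportCost_eq_sum]
  simp only [Finset.mul_sum, add_mul, Finset.sum_add_distrib, mul_assoc]

lemma transportCost_gluing_le (hconn : G.Connected) (hA : IsCoupling m₁ m₂ A)
    (hB : IsCoupling m₂ m₃ B) :
    transportCost G (gluing A B m₂) ≤ transportCost G A + transportCost G B := by
  obtain ⟨s, hAs, hBs⟩ := hA.exists_supportedOn₂ hB
  set g : V → V → V → ℝ := fun x y z => A x y * B y z / m₂ y
  have hg (x y z : V) : 0 ≤ g x y z :=
    div_nonneg (mul_nonneg (hA.nonneg x y) (hB.nonneg y z)) (hA.right_nonneg y)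
  rw [(hAs.gluing hBs).transportCost_eq_sum, hAs.transportCost_eq_sum, hBs.transportCost_eq_sum]
  simp only [hAs.gluing_eq_sum, Finset.sum_mul]
  calc ∑ x ∈ s, ∑ z ∈ s, ∑ y ∈ s, g x y z * G.dist x z
      ≤ ∑ x ∈ s, ∑ z ∈ s, ∑ y ∈ s,
          (g x y z * G.dist x y + g x y z * G.dist y z) := by
        gcongr with x _ z _ y _
        rw [← mul_add]
        exact mul_le_mul_of_nonneg_left (mod_cast hconn.dist_triangle) (hg x y z)
    _ = ∑ x ∈ s, ∑ y ∈ s, (∑ z ∈ s, g x y z) * G.dist x y +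
          ∑ y ∈ s, ∑ z ∈ s, (∑ x ∈ s, g x y z) * G.dist y z := by
        simp only [Finset.sum_add_distrib, Finset.sum_mul]
        congr 1
        · exact Finset.sum_congr rfl fun _ _ => Finset.sum_comm
        · exact Finset.sum_comm.trans
            ((Finset.sum_congr rfl fun _ _ => Finset.sum_comm).trans Finset.sum_comm)
    _ = _ := by
        simp only [g, hA.sum_gluing_right hB hBs, hA.sum_gluing_left hB hAs]

end TransportCost

section TransportDist

variable {G : SimpleGraph V} {m m₁ m₂ m₃ n₁ n₂ : V → ℝ} {A : V → V → ℝ}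

lemma transportDist_le_transportCost (hA : IsCoupling m₁ m₂ A) :
    transportDist G m₁ m₂ ≤ transportCost G A :=
  csInf_le ⟨0, by rintro _ ⟨B, hB, rfl⟩; exact hB.transportCost_nonneg⟩ ⟨A, hA, rfl⟩

lemma le_transportDist (h₁ : IsFinProb m₁) (h₂ : IsFinProb m₂) {b : ℝ}
    (h : ∀ A, IsCoupling m₁ m₂ A → b ≤ transportCost G A) : b ≤ transportDist G m₁ m₂ :=
  le_csInf ⟨_, _, IsCoupling.prod h₁ h₂, rfl⟩ (by rintro _ ⟨A, hA, rfl⟩; exact h A hA)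

lemma exists_transportCost_lt (h₁ : IsFinProb m₁) (h₂ : IsFinProb m₂) {ε : ℝ} (hε : 0 < ε) :
    ∃ A, IsCoupling m₁ m₂ A ∧ transportCost G A < transportDist G m₁ m₂ + ε := by
  obtain ⟨_, ⟨A, hA, rfl⟩, hlt⟩ :=
    Real.lt_sInf_add_pos (s := {w | ∃ A, IsCoupling m₁ m₂ A ∧ w = transportCost G A})
      ⟨_, _, IsCoupling.prod h₁ h₂, rfl⟩ hε
  exact ⟨A, hA, hlt⟩

lemma transportDist_self_nonpos (hm : IsFinProb m) : transportDist G m m ≤ 0 :=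
  transportCost_diag (G := G) ▸ transportDist_le_transportCost (IsCoupling.diag hm)

lemma transportDist_single_le (x y : V) :
    transportDist G (Pi.single x 1) (Pi.single y 1) ≤ G.dist x y :=
  transportCost_single_mul_single (G := G) x y ▸
    transportDist_le_transportCost (IsCoupling.prod (.single x) (.single y))

theorem transportDist_triangle (hconn : G.Connected) (h₁ : IsFinProb m₁) (h₂ : IsFinProb m₂)
    (h₃ : IsFinProb m₃) :
    transportDist G m₁ m₃ ≤ transportDist G m₁ m₂ + transportDist G m₂ m₃ := by
  refine le_of_forall_pos_le_add fun ε hε => ?_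
  obtain ⟨A, hA, hAε⟩ := exists_transportCost_lt (G := G) h₁ h₂ (half_pos hε)
  obtain ⟨B, hB, hBε⟩ := exists_transportCost_lt (G := G) h₂ h₃ (half_pos hε)
  calc transportDist G m₁ m₃ ≤ transportCost G (gluing A B m₂) :=
        transportDist_le_transportCost (hA.gluing hB h₁.le_one)
    _ ≤ transportCost G A + transportCost G B := transportCost_gluing_le hconn hA hB
    _ ≤ _ := by linarith

theorem transportDist_convexComb_le (hm₁ : IsFinProb m₁) (hm₂ : IsFinProb m₂)
    (hn₁ : IsFinProb n₁) (hn₂ : IsFinProb n₂) {c : ℝ} (hc₀ : 0 ≤ c) (hc₁ : c ≤ 1) :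
    transportDist G (fun u => (1 - c) * m₁ u + c * n₁ u) (fun v => (1 - c) * m₂ v + c * n₂ v) ≤
      (1 - c) * transportDist G m₁ m₂ + c * transportDist G n₁ n₂ := by
  refine le_of_forall_pos_le_add fun ε hε => ?_
  obtain ⟨A, hA, hAε⟩ := exists_transportCost_lt (G := G) hm₁ hm₂ hε
  obtain ⟨B, hB, hBε⟩ := exists_transportCost_lt (G := G) hn₁ hn₂ hε
  calc _ ≤ transportCost G (fun u v => (1 - c) * A u v + c * B u v) :=
        transportDist_le_transportCost (hA.convexComb hB hc₀ hc₁)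
    _ = (1 - c) * transportCost G A + c * transportCost G B := transportCost_convexComb hA hB c
    _ ≤ (1 - c) * (transportDist G m₁ m₂ + ε) + c * (transportDist G n₁ n₂ + ε) := by
        gcongr
    _ = _ := by ring

theorem transportDist_le_sum_walk (hconn : G.Connected) {μ : V → V → ℝ}
    (hμ : ∀ v, IsFinProb (μ v)) {x y : V} (p : G.Walk x y) :
    transportDist G (μ x) (μ y) ≤
      ∑ i ∈ Finset.range p.length, transportDist G (μ (p.getVert i)) (μ (p.getVert (i + 1))) := by
  induction p with
  | nil => simpa using transportDist_self_nonpos (hμ _)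
  | @cons a b c _ q ih =>
    calc transportDist G (μ a) (μ c) ≤ transportDist G (μ a) (μ b) + transportDist G (μ b) (μ c) :=
          transportDist_triangle hconn (hμ a) (hμ b) (hμ c)
      _ ≤ _ := by
          rw [SimpleGraph.Walk.length_cons, Finset.sum_range_succ', add_comm]
          simpa only [SimpleGraph.Walk.getVert_cons_succ, SimpleGraph.Walk.getVert_zero] using
            add_le_add_left ih _

end TransportDist

section LazyWalk

variable (G : SimpleGraph V) [G.LocallyFinite] {α : ℝ} {x : V}

lemma lazyWalk_support_subset :
    Function.support (lazyWalk G α x) ⊆ ↑(insert x (G.neighborFinset x)) := by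
  intro v hv
  rw [Function.mem_support, lazyWalk] at hv
  split_ifs at hv with h₁ h₂
  · simp [h₁]
  · simp [h₂]
  · exact absurd rfl hv

lemma finsum_lazyWalk_mul (hx : G.degree x ≠ 0) {f : V → ℝ} {c : ℝ}
    (hf : ∀ v, G.Adj x v → f v = c) :
    ∑ᶠ v, lazyWalk G α x v * f v = α * f x + (1 - α) * c := by
  rw [finsum_eq_sum_of_support_subset _
      ((Function.support_mul_subset_left _ _).trans (lazyWalk_support_subset G)),
    Finset.sum_insert (by simp)]
  have hN : ∀ v ∈ G.neighborFinset x, lazyWalk G α x v * f v = (1 - α) / G.degree x * c := by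
    intro v hv
    rw [SimpleGraph.mem_neighborFinset] at hv
    simp [lazyWalk, hv.ne', hv, hf v hv]
  rw [Finset.sum_congr rfl hN, Finset.sum_const, SimpleGraph.card_neighborFinset_eq_degree]
  simp only [lazyWalk, if_true, nsmul_eq_mul]
  field_simp

lemma isFinProb_lazyWalk (hx : G.degree x ≠ 0) (hα₀ : 0 ≤ α) (hα₁ : α ≤ 1) :
    IsFinProb (lazyWalk G α x) where
  finite_support := (Finset.finite_toSet _).subset (lazyWalk_support_subset G)
  nonneg v := by
    unfold lazyWalk
    split_ifs
    exacts [hα₀, div_nonneg (by linarith) (Nat.cast_nonneg _), le_rfl]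
  finsum_eq_one := by
    simpa using finsum_lazyWalk_mul G (α := α) hx (f := fun _ => (1 : ℝ)) (c := 1) fun _ _ => rfl

lemma lazyWalk_eq_convexComb {α' c : ℝ} (hc : c * (1 - α) = 1 - α') :
    lazyWalk G α' x = fun v => (1 - c) * (Pi.single x 1 : V → ℝ) v + c * lazyWalk G α x v := by
  funext v
  simp only [lazyWalk, Pi.single_apply]
  split_ifs
  · linear_combination hc
  · rw [← hc]; ring
  · ring

end LazyWalk

lemma SimpleGraph.Connected.degree_ne_zero_of_ne {G : SimpleGraph V} [G.LocallyFinite]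
    (hconn : G.Connected) {x y : V} (hxy : x ≠ y) (v : V) : G.degree v ≠ 0 :=
  haveI : Nontrivial V := ⟨x, y, hxy⟩
  (hconn.preconnected.degree_pos_of_nontrivial v).ne'

section Curvature

variable {G : SimpleGraph V} [G.LocallyFinite] {x y : V} {α α' : ℝ}

lemma dist_sub_le_transportCost_lazyWalk (hconn : G.Connected) (hx : G.degree x ≠ 0)
    (hy : G.degree y ≠ 0) {A : V → V → ℝ} (hA : IsCoupling (lazyWalk G α x) (lazyWalk G α y) A) :
    G.dist x y - 2 * (1 - α) ≤ transportCost G A :=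
  -- integrate `d(x, y) - d(x, u) - d(y, v) ≤ d(u, v)` against `A`
  calc (G.dist x y : ℝ) - 2 * (1 - α)
      = ∑ᶠ u, lazyWalk G α x u * (G.dist x y - G.dist x u) +
          ∑ᶠ v, lazyWalk G α y v * -(G.dist y v : ℝ) := by
        rw [finsum_lazyWalk_mul G hx (c := G.dist x y - 1), finsum_lazyWalk_mul G hy (c := -1)]
        · simp only [SimpleGraph.dist_self, CharP.cast_eq_zero]
          ring
        · intro v hv
          simp [SimpleGraph.dist_eq_one_iff_adj.2 hv]
        · intro v hv
          simp [SimpleGraph.dist_eq_one_iff_adj.2 hv]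
    _ = ∑ᶠ p : V × V, A p.1 p.2 * ((G.dist x y - G.dist x p.1) + -(G.dist y p.2 : ℝ)) :=
        (hA.finsum_mul_add _ _).symm
    _ ≤ transportCost G A := hA.finsum_mul_le (g := fun u v => (G.dist u v : ℝ))
        (f := fun u v => G.dist x y - G.dist x u + -(G.dist y v : ℝ)) fun u v => by
        have h₁ : G.dist x y ≤ G.dist x u + G.dist u y := hconn.dist_triangle
        have h₂ : G.dist u y ≤ G.dist u v + G.dist v y := hconn.dist_triangle
        rw [SimpleGraph.dist_comm (u := y)]
        have : (G.dist x y : ℝ) ≤ G.dist x u + G.dist u v + G.dist v y :=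
          mod_cast h₁.trans (by omega)
        linarith

lemma dist_sub_le_transportDist_lazyWalk (hconn : G.Connected) (hx : G.degree x ≠ 0)
    (hy : G.degree y ≠ 0) (hα₀ : 0 ≤ α) (hα₁ : α ≤ 1) :
    G.dist x y - 2 * (1 - α) ≤ transportDist G (lazyWalk G α x) (lazyWalk G α y) :=
  le_transportDist (isFinProb_lazyWalk G hx hα₀ hα₁) (isFinProb_lazyWalk G hy hα₀ hα₁)
    fun _ hA => dist_sub_le_transportCost_lazyWalk hconn hx hy hA

lemma transportDist_lazyWalk_le (hx : G.degree x ≠ 0) (hy : G.degree y ≠ 0) (hα₀ : 0 ≤ α)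
    (hαα' : α ≤ α') (hα' : α' < 1) :
    transportDist G (lazyWalk G α' x) (lazyWalk G α' y) ≤
      (1 - (1 - α') / (1 - α)) * G.dist x y +
        (1 - α') / (1 - α) * transportDist G (lazyWalk G α x) (lazyWalk G α y) := by
  have hα : 0 < 1 - α := by linarith
  have hc : (1 - α') / (1 - α) * (1 - α) = 1 - α' := div_mul_cancel₀ _ hα.ne'
  have hc₁ : (1 - α') / (1 - α) ≤ 1 := div_le_one_of_le₀ (by linarith) hα.le
  rw [lazyWalk_eq_convexComb G hc (x := x), lazyWalk_eq_convexComb G hc (x := y)]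
  refine (transportDist_convexComb_le (.single x) (.single y)
    (isFinProb_lazyWalk G hx hα₀ (by linarith)) (isFinProb_lazyWalk G hy hα₀ (by linarith))
    (div_nonneg (by linarith) hα.le) hc₁).trans ?_
  have : 0 ≤ 1 - (1 - α') / (1 - α) := by linarith
  gcongr
  exact transportDist_single_le x y

lemma alphaRicci_le (hconn : G.Connected) (hxy : x ≠ y) (hα₀ : 0 ≤ α) (hα₁ : α ≤ 1) :
    alphaRicci G α x y ≤ 2 * (1 - α) / G.dist x y := by
  have hd : (0 : ℝ) < G.dist x y := mod_cast hconn.pos_dist_of_ne hxy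
  have := dist_sub_le_transportDist_lazyWalk hconn (hconn.degree_ne_zero_of_ne hxy x)
    (hconn.degree_ne_zero_of_ne hxy y) hα₀ hα₁
  rw [alphaRicci, sub_le_iff_le_add, ← add_div, le_div_iff₀ hd]
  linarith

lemma mul_alphaRicci_le (hconn : G.Connected) (hxy : x ≠ y) (hα₀ : 0 ≤ α) (hαα' : α ≤ α')
    (hα' : α' < 1) : (1 - α') / (1 - α) * alphaRicci G α x y ≤ alphaRicci G α' x y := by
  have hd : (0 : ℝ) < G.dist x y := mod_cast hconn.pos_dist_of_ne hxy
  have := transportDist_lazyWalk_le (hconn.degree_ne_zero_of_ne hxy x)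
    (hconn.degree_ne_zero_of_ne hxy y) hα₀ hαα' hα'
  have hdiv : transportDist G (lazyWalk G α' x) (lazyWalk G α' y) / G.dist x y ≤
      1 - (1 - α') / (1 - α) +
        (1 - α') / (1 - α) * (transportDist G (lazyWalk G α x) (lazyWalk G α y) / G.dist x y) := by
    rw [div_le_iff₀ hd, add_mul, mul_assoc, div_mul_cancel₀ _ hd.ne']
    exact this
  rw [alphaRicci, alphaRicci]
  linarith

lemma monotoneOn_alphaRicci_div (hconn : G.Connected) (hxy : x ≠ y) :
    MonotoneOn (fun α => alphaRicci G α x y / (1 - α)) (Set.Ioo 0 1) := by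
  rintro α ⟨hα₀, hα₁⟩ α' ⟨-, hα'₁⟩ hαα'
  have hα : 0 < 1 - α := by linarith
  dsimp only
  rw [div_le_div_iff₀ hα (by linarith)]
  calc alphaRicci G α x y * (1 - α') = (1 - α') / (1 - α) * alphaRicci G α x y * (1 - α) := by
        field_simp
    _ ≤ alphaRicci G α' x y * (1 - α) := by
        gcongr
        exact mul_alphaRicci_le hconn hxy hα₀.le hαα' hα'₁

theorem exists_hasLLYCurv (hconn : G.Connected) (hxy : x ≠ y) : ∃ κ, HasLLYCurv G x y κ := by
  refine ⟨_, (monotoneOn_alphaRicci_div hconn hxy).tendsto_nhdsWithin_Ioo_left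
    (Set.nonempty_Ioo.2 zero_lt_one) ⟨2 / G.dist x y, ?_⟩⟩
  rintro _ ⟨α, ⟨hα₀, hα₁⟩, rfl⟩
  have hα : 0 < 1 - α := by linarith
  calc alphaRicci G α x y / (1 - α) ≤ 2 * (1 - α) / G.dist x y / (1 - α) := by
        gcongr
        exact alphaRicci_le hconn hxy hα₀.le hα₁.le
    _ = 2 / G.dist x y := by field_simp

lemma sum_alphaRicci_le_of_walk (hconn : G.Connected) (hxy : x ≠ y) (hα₀ : 0 ≤ α) (hα₁ : α ≤ 1)
    (p : G.Walk x y) (hp : p.length = G.dist x y) :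
    ∑ i ∈ Finset.range p.length, alphaRicci G α (p.getVert i) (p.getVert (i + 1)) ≤
      G.dist x y * alphaRicci G α x y := by
  have hd : (G.dist x y : ℝ) ≠ 0 := mod_cast (hconn.pos_dist_of_ne hxy).ne'
  have hedge : ∀ i ∈ Finset.range p.length, alphaRicci G α (p.getVert i) (p.getVert (i + 1)) =
      1 - transportDist G (lazyWalk G α (p.getVert i)) (lazyWalk G α (p.getVert (i + 1))) := by
    intro i hi
    rw [alphaRicci, SimpleGraph.dist_eq_one_iff_adj.2 (p.adj_getVert_succ (Finset.mem_range.1 hi)),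
      Nat.cast_one, div_one]
  have hlen : (p.length : ℝ) = G.dist x y := mod_cast hp
  rw [Finset.sum_congr rfl hedge, Finset.sum_sub_distrib, Finset.sum_const, Finset.card_range,
    nsmul_one, hlen, alphaRicci, mul_sub, mul_one, mul_div_cancel₀ _ hd]
  linarith [transportDist_le_sum_walk hconn
    (fun v => isFinProb_lazyWalk G (hconn.degree_ne_zero_of_ne hxy v) hα₀ hα₁) p]

theorem sum_le_mul_of_hasLLYCurv_walk (hconn : G.Connected) (hxy : x ≠ y) (p : G.Walk x y)
    (hp : p.length = G.dist x y) {κ : ℝ} (hκ : HasLLYCurv G x y κ) {κe : ℕ → ℝ}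
    (hκe : ∀ i < p.length, HasLLYCurv G (p.getVert i) (p.getVert (i + 1)) (κe i)) :
    ∑ i ∈ Finset.range p.length, κe i ≤ G.dist x y * κ :=
  le_of_tendsto_of_tendsto (tendsto_finsetSum _ fun i hi => hκe i (Finset.mem_range.1 hi))
    (hκ.const_mul _) <| Filter.eventually_of_mem (Ioo_mem_nhdsLT zero_lt_one)
      fun α ⟨hα₀, hα₁⟩ => by
        dsimp only
        rw [← Finset.sum_div, ← mul_div_assoc]
        exact div_le_div_of_nonneg_right (sum_alphaRicci_le_of_walk hconn hxy hα₀.le hα₁.le p hp)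
          (sub_pos.2 hα₁).le

end Curvature

/-- Lemma 3: if every edge of a simple connected graph has Lin–Lu–Yau Ricci curvature
at least `κ₀`, then so does every pair of distinct vertices. -/
theorem curvature_all_pairs (G : SimpleGraph V) [G.LocallyFinite] (hconn : G.Connected)
    (κ₀ : ℝ)
    (h : ∀ x y : V, G.Adj x y → ∃ κ : ℝ, κ₀ ≤ κ ∧ HasLLYCurv G x y κ) :
    ∀ x y : V, x ≠ y → ∃ κ : ℝ, κ₀ ≤ κ ∧ HasLLYCurv G x y κ := by
  intro x y hxy
  obtain ⟨κ, hκ⟩ := exists_hasLLYCurv hconn hxy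
  refine ⟨κ, ?_, hκ⟩
  have hd : 0 < G.dist x y := hconn.pos_dist_of_ne hxy
  obtain ⟨p, hp⟩ := SimpleGraph.exists_walk_of_dist_ne_zero hd.ne'
  choose! κe hκe₀ hκe using h
  have hκ₀ : G.dist x y * κ₀ ≤ G.dist x y * κ :=
    calc (G.dist x y : ℝ) * κ₀ = ∑ i ∈ Finset.range p.length, κ₀ := by simp [hp]
      _ ≤ ∑ i ∈ Finset.range p.length, κe (p.getVert i) (p.getVert (i + 1)) :=
        Finset.sum_le_sum fun i hi => hκe₀ _ _ (p.adj_getVert_succ (Finset.mem_range.1 hi))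
      _ ≤ G.dist x y * κ := sum_le_mul_of_hasLLYCurv_walk hconn hxy p hp hκ
        fun i hi => hκe _ _ (p.adj_getVert_succ hi)
  exact le_of_mul_le_mul_left hκ₀ (mod_cast hd)
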